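/- arXiv:2110.03376 — 2 statements merged into one kernel-verified Lean document; each statement's English description precedes it below -/
import Mathlib

section
/- Let f ∈ ℝ and define J(z,w) := w₁² + 2f·z₁². Then: (i) J(z(t),z'(t)) is constant along every solution of the Hooke equation z'' = −2f·z; (ii) for any c ∈ ℝ, if z lies on the vertical line {z₁ = c} and w' := (−w₁, w₂) is the elastic reflection of w at this line, then J(z,w') = J(z,w); (iii) for any c ∈ ℝ, if z lies on the horizontal line {z₂ = c} and w' := (w₁, −w₂) is the elastic reflection of w at this line, then J(z,w') = J(z,w). Hence J is a first integral of the Hooke billiard with any combination of horizontal and vertical lines as reflection wall. -/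
/-! Along a solution, `d/dt (v₁² + 2f z₁²) = 2 v₁ (-2f z₁) + 2f · 2 z₁ v₁ = 0`, so `J` is constant
on any interval (convex set) by the mean value inequality. A reflection at a vertical line flips the sign of
`w₁`, which `J` sees only through `w₁²`, and one at a horizontal line does not touch `w₁` at all. -/

/-- The first integral `J(z,w) = w₁² + 2f·z₁²` of the Hooke billiard with
horizontal/vertical line walls. -/
def hookeJ (f : ℝ) (z w : ℝ × ℝ) : ℝ :=
  w.1 ^ 2 + 2 * f * z.1 ^ 2

theorem Convex.eq_of_hasDerivWithinAt_zero {E : Type*} [NormedAddCommGroup E] [NormedSpace ℝ E]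
    {s : Set ℝ} (hs : Convex ℝ s) {g : ℝ → E} (hg : ∀ t ∈ s, HasDerivWithinAt g 0 s t)
    {t t' : ℝ} (ht : t ∈ s) (ht' : t' ∈ s) : g t = g t' := by
  have h := hs.norm_image_sub_le_of_norm_hasDerivWithin_le hg (C := 0) (by simp) ht' ht
  rwa [zero_mul, norm_le_zero_iff, sub_eq_zero] at h

theorem hasDerivWithinAt_hookeJ {f : ℝ} {z v : ℝ → ℝ × ℝ} {s : Set ℝ} {t : ℝ}
    (hz : HasDerivWithinAt z (v t) s t) (hv : HasDerivWithinAt v ((-(2 * f)) • z t) s t) :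
    HasDerivWithinAt (fun u => hookeJ f (z u) (v u)) 0 s t := by
  have hv₁ : HasDerivWithinAt (fun u => (v u).1) (-(2 * f) * (z t).1) s t := hv.fst
  have hz₁ : HasDerivWithinAt (fun u => (z u).1) (v t).1 s t := hz.fst
  exact ((hv₁.pow 2).add ((hz₁.pow 2).const_mul (2 * f))).congr_deriv (by ring)

theorem hookeJ_neg_fst (f : ℝ) (z w : ℝ × ℝ) : hookeJ f z (-w.1, w.2) = hookeJ f z w := by
  simp [hookeJ]

theorem hookeJ_neg_snd (f : ℝ) (z w : ℝ × ℝ) : hookeJ f z (w.1, -w.2) = hookeJ f z w := rfl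

/-- `J(z,w) = w₁² + 2f·z₁²` is a first integral of the Hooke billiard with any
combination of horizontal and vertical lines as reflection wall: it is constant
along solutions of `z'' = −2f·z` and invariant under elastic reflections at any
vertical line `{z₁ = c}` and any horizontal line `{z₂ = c}`. -/
theorem stmt_6 (f : ℝ) :
    (∀ I : Set ℝ, Convex ℝ I → ∀ z v : ℝ → ℝ × ℝ,
      (∀ t ∈ I, HasDerivWithinAt z (v t) I t) →
      (∀ t ∈ I, HasDerivWithinAt v ((-(2 * f)) • z t) I t) →
      ∀ t ∈ I, ∀ t' ∈ I, hookeJ f (z t) (v t) = hookeJ f (z t') (v t')) ∧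
    (∀ c : ℝ, ∀ z w : ℝ × ℝ, z.1 = c →
      hookeJ f z (-w.1, w.2) = hookeJ f z w) ∧
    (∀ c : ℝ, ∀ z w : ℝ × ℝ, z.2 = c →
      hookeJ f z (w.1, -w.2) = hookeJ f z w) :=
  ⟨fun _ hI _ _ hz hv _ ht _ ht' =>
      hI.eq_of_hasDerivWithinAt_zero (fun s hs => hasDerivWithinAt_hookeJ (hz s hs) (hv s hs))
        ht ht',
    fun _ z w _ => hookeJ_neg_fst f z w,
    fun _ z w _ => hookeJ_neg_snd f z w⟩
end

section
/- Let s ∈ ℝ and define W(q,p) := (q₁p₂ − q₂p₁)·p₂ − s·q₁/√(q₁² + q₂²) for q ∈ ℝ² \ {0}, p ∈ ℝ². Then: (i) for every twice-differentiable curve q : I → ℝ² \ {0} satisfying the Kepler equation q''(t) = −s·q(t)/‖q(t)‖³, the function t ↦ W(q(t), q'(t)) is constant; (ii) for every c ≠ 0 and every point q on the parabola {q₁ = c² − q₂²/(4c²)} (which is focused at the origin with the q₁-axis as its axis), the elastic reflection p' of any p ∈ ℝ² at this parabola at q (with normal n = (1, q₂/(2c²))) satisfies W(q,p') = W(q,p);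 (iii) the same invariance holds at every point of the oppositely oriented focused parabola {q₁ = q₂²/(4c²) − c²}, c ≠ 0 (with normal n = (1, −q₂/(2c²))). Hence W is a first integral of the Kepler billiard with any combination of focused parabolae with the q₁-axis as common axis as reflection wall. -/
/-!
`W` is the first component `p₂ L − s q₁/‖q‖` of the Laplace–Runge–Lenz vector, where
`L = q₁p₂ − q₂p₁` is the angular momentum. Along a Kepler orbit `L` is constant (the force is
central) and `L p₂'` cancels the derivative of `s q₁/‖q‖`, so `W` is constant on the (convex) time
interval by the mean value inequality. Invariance under reflection at a focused parabola with the
`q₁`-axis as axis is a rational identity once `q₁` is eliminated through the equation of the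
parabola.
-/

noncomputable def keplerW (s : ℝ) (q p : ℝ × ℝ) : ℝ :=
  (q.1 * p.2 - q.2 * p.1) * p.2 - s * q.1 / Real.sqrt (q.1 ^ 2 + q.2 ^ 2)

section

variable {𝕜 E F : Type*} [NontriviallyNormedField 𝕜] [NormedAddCommGroup E] [NormedSpace 𝕜 E]
  [NormedAddCommGroup F] [NormedSpace 𝕜 F] {f : 𝕜 → E × F} {f' : E × F} {s : Set 𝕜} {x : 𝕜}

theorem HasDerivWithinAt.fst (h : HasDerivWithinAt f f' s x) :
    HasDerivWithinAt (fun t => (f t).1) f'.1 s x := by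
  simpa using h.hasFDerivWithinAt.fst.hasDerivWithinAt

theorem HasDerivWithinAt.snd (h : HasDerivWithinAt f f' s x) :
    HasDerivWithinAt (fun t => (f t).2) f'.2 s x := by
  simpa using h.hasFDerivWithinAt.snd.hasDerivWithinAt

end

theorem Convex.is_const_of_hasDerivWithinAt_zero {𝕜 G : Type*} [RCLike 𝕜] [NormedAddCommGroup G]
    [NormedSpace 𝕜 G] {f : 𝕜 → G} {s : Set 𝕜} {x y : 𝕜} (hs : Convex ℝ s)
    (hf : ∀ x ∈ s, HasDerivWithinAt f 0 s x) (hx : x ∈ s) (hy : y ∈ s) : f x = f y := by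
  have := hs.norm_image_sub_le_of_norm_hasDerivWithin_le hf (fun _ _ => norm_zero.le) hx hy
  rw [zero_mul, norm_le_zero_iff, sub_eq_zero] at this
  exact this.symm

noncomputable def reflect (n p : ℝ × ℝ) : ℝ × ℝ :=
  p - (2 * ((p.1 * n.1 + p.2 * n.2) / (n.1 ^ 2 + n.2 ^ 2))) • n

/- For `a ≠ 0`, `{q₁ = a − q₂²/(4a)}` is the parabola with focus at the origin and vertex `(a, 0)`,
and `(1, q₂/(2a))` is normal to it at `q`; the two walls of the theorem are `a = c²` and `a = -c²`. -/
theorem keplerW_reflect_of_mem_focusedParabola (s : ℝ) {a : ℝ} (ha : a ≠ 0) {q : ℝ × ℝ}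
    (hq : q.1 = a - q.2 ^ 2 / (4 * a)) (p : ℝ × ℝ) :
    keplerW s q (reflect (1, q.2 / (2 * a)) p) = keplerW s q p := by
  simp only [keplerW, reflect, Prod.fst_sub, Prod.snd_sub, Prod.smul_fst, Prod.smul_snd,
    smul_eq_mul]
  rw [hq]
  congr 1
  field_simp
  ring

theorem hasDerivWithinAt_keplerW_of_kepler {s : ℝ} {I : Set ℝ} {q v : ℝ → ℝ × ℝ} {t : ℝ}
    (hq0 : q t ≠ 0) (hq : HasDerivWithinAt q (v t) I t)
    (hv : HasDerivWithinAt v ((-(s / Real.sqrt ((q t).1 ^ 2 + (q t).2 ^ 2) ^ 3)) • q t) I t) :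
    HasDerivWithinAt (fun t => keplerW s (q t) (v t)) 0 I t := by
  set x := (q t).1
  set y := (q t).2
  set u := (v t).1
  set w := (v t).2
  set r := Real.sqrt (x ^ 2 + y ^ 2)
  set k := s / r ^ 3
  have hρ : 0 < x ^ 2 + y ^ 2 := by
    have : x ≠ 0 ∨ y ≠ 0 := by
      contrapose! hq0
      exact Prod.ext hq0.1 hq0.2
    rcases this with h | h <;> positivity
  have hr : r ^ 2 = x ^ 2 + y ^ 2 := Real.sq_sqrt hρ.le
  have hr0 : r ≠ 0 := (Real.sqrt_pos.2 hρ).ne'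
  have hx : HasDerivWithinAt (fun t => (q t).1) u I t := hq.fst
  have hy : HasDerivWithinAt (fun t => (q t).2) w I t := hq.snd
  have hu : HasDerivWithinAt (fun t => (v t).1) (-k * x) I t := by simpa using hv.fst
  have hw : HasDerivWithinAt (fun t => (v t).2) (-k * y) I t := by simpa using hv.snd
  -- conservation of angular momentum for a central force
  have hL : HasDerivWithinAt (fun t => (q t).1 * (v t).2 - (q t).2 * (v t).1) 0 I t :=
    ((hx.mul hw).sub (hy.mul hu)).congr_deriv (by ring)
  have hR : HasDerivWithinAt (fun t => Real.sqrt ((q t).1 ^ 2 + (q t).2 ^ 2))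
      ((x * u + y * w) / r) I t :=
    ((Real.hasDerivAt_sqrt hρ.ne').comp_hasDerivWithinAt t ((hx.pow 2).add (hy.pow 2))).congr_deriv
      (by field_simp; ring)
  refine ((hL.mul hw).sub ((hx.const_mul s).div hR hr0)).congr_deriv ?_
  -- `set` does not abbreviate the radius produced by `HasDerivWithinAt.div`
  rw [show √((q t).1 ^ 2 + (q t).2 ^ 2) = r from rfl]
  simp only [k]
  field_simp
  linear_combination (-s * u) * hr

theorem keplerW_eq_of_kepler {s : ℝ} {I : Set ℝ} (hI : Convex ℝ I) {q v : ℝ → ℝ × ℝ}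
    (hq0 : ∀ t ∈ I, q t ≠ 0) (hq : ∀ t ∈ I, HasDerivWithinAt q (v t) I t)
    (hv : ∀ t ∈ I, HasDerivWithinAt v
      ((-(s / Real.sqrt ((q t).1 ^ 2 + (q t).2 ^ 2) ^ 3)) • q t) I t)
    {t t' : ℝ} (ht : t ∈ I) (ht' : t' ∈ I) :
    keplerW s (q t) (v t) = keplerW s (q t') (v t') :=
  hI.is_const_of_hasDerivWithinAt_zero
    (fun x hx => hasDerivWithinAt_keplerW_of_kepler (hq0 x hx) (hq x hx) (hv x hx)) ht ht'

/-- `W` is a first integral of the Kepler billiard with any combination of focused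
parabolae with the `q₁`-axis as common axis as reflection wall: it is constant along
solutions of `q'' = −s·q/‖q‖³` and invariant under elastic reflections at the focused
parabolae `{q₁ = c² − q₂²/(4c²)}` and `{q₁ = q₂²/(4c²) − c²}`. -/
theorem stmt_9 (s : ℝ) :
    (∀ I : Set ℝ, Convex ℝ I → ∀ q v : ℝ → ℝ × ℝ,
      (∀ t ∈ I, q t ≠ 0) →
      (∀ t ∈ I, HasDerivWithinAt q (v t) I t) →
      (∀ t ∈ I, HasDerivWithinAt v
        ((-(s / Real.sqrt ((q t).1 ^ 2 + (q t).2 ^ 2) ^ 3)) • q t) I t) →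
      ∀ t ∈ I, ∀ t' ∈ I, keplerW s (q t) (v t) = keplerW s (q t') (v t')) ∧
    (∀ c : ℝ, c ≠ 0 → ∀ q p : ℝ × ℝ,
      q.1 = c ^ 2 - q.2 ^ 2 / (4 * c ^ 2) →
      ∀ n p' : ℝ × ℝ, n = (1, q.2 / (2 * c ^ 2)) →
      p' = p - (2 * ((p.1 * n.1 + p.2 * n.2) / (n.1 ^ 2 + n.2 ^ 2))) • n →
      keplerW s q p' = keplerW s q p) ∧
    (∀ c : ℝ, c ≠ 0 → ∀ q p : ℝ × ℝ,
      q.1 = q.2 ^ 2 / (4 * c ^ 2) - c ^ 2 →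
      ∀ n p' : ℝ × ℝ, n = (1, -q.2 / (2 * c ^ 2)) →
      p' = p - (2 * ((p.1 * n.1 + p.2 * n.2) / (n.1 ^ 2 + n.2 ^ 2))) • n →
      keplerW s q p' = keplerW s q p) := by
  refine ⟨fun I hI q v hq0 hq hv t ht t' ht' => keplerW_eq_of_kepler hI hq0 hq hv ht ht', ?_, ?_⟩
  · rintro c hc q p hq n p' rfl rfl
    exact keplerW_reflect_of_mem_focusedParabola s (pow_ne_zero 2 hc) hq p
  · rintro c hc q p hq n p' rfl rfl
    have hq' : q.1 = -c ^ 2 - q.2 ^ 2 / (4 * -c ^ 2) := by rw [hq]; ring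
    rw [show -q.2 / (2 * c ^ 2) = q.2 / (2 * -c ^ 2) by ring]
    exact keplerW_reflect_of_mem_focusedParabola s (neg_ne_zero.2 (pow_ne_zero 2 hc)) hq' p
end
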